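/- arXiv:2111.11440 — 6 statements merged into one kernel-verified Lean document; each statement's English description precedes it below -/
import Mathlib

section
/- In GMRES, if at step i the next Arnoldi vector vanishes (u_{i+1} = 0, i.e., h_{i+1,i} = 0), then the GMRES iterate x_i satisfies A x_i = b; that is, GMRES has found the exact solution. -/
/-!
At a breakdown `A U = U H`, the left inverse `A⁻¹` of `A` yields the left inverse `Uᵀ A⁻¹ U` of the
square matrix `H`, so `H` is invertible and the column space of `U` is mapped onto itself by `A`.
Since `r₀ = β u₁` lies in that space, some `x₀ + U z` has zero residual, and the residual
norm minimized by `y` must vanish as well.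
-/

open Matrix

section ArnoldiBreakdown

variable {ι κ R : Type*} [Fintype ι] [DecidableEq ι] [Fintype κ] [DecidableEq κ] [CommRing R]
  {A : Matrix ι ι R} {U : Matrix ι κ R} {H : Matrix κ κ R}

theorem mul_transpose_mul_nonsing_inv_mul_eq_one (hA : IsUnit A.det) (horth : Uᵀ * U = 1)
    (hbd : A * U = U * H) : H * (Uᵀ * A⁻¹ * U) = 1 :=
  mul_eq_one_comm.mp <| calc
    Uᵀ * A⁻¹ * U * H = Uᵀ * (A⁻¹ * A) * U := by
      simp only [Matrix.mul_assoc, ← hbd]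
    _ = 1 := by rw [nonsing_inv_mul A hA, Matrix.mul_one, horth]

theorem mulVec_mulVec_transpose_mul_nonsing_inv_mul (hA : IsUnit A.det) (horth : Uᵀ * U = 1)
    (hbd : A * U = U * H) (c : κ → R) :
    A *ᵥ (U *ᵥ ((Uᵀ * A⁻¹ * U) *ᵥ c)) = U *ᵥ c := by
  rw [mulVec_mulVec, hbd, ← mulVec_mulVec,
    mulVec_mulVec _ H, mul_transpose_mul_nonsing_inv_mul_eq_one hA horth hbd, one_mulVec]

end ArnoldiBreakdown

theorem sqrt_dotProduct_self_eq_zero_iff {ι : Type*} [Fintype ι] {v : ι → ℝ} :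
    √(v ⬝ᵥ v) = 0 ↔ v = 0 := by
  rw [Real.sqrt_eq_zero (by simpa using dotProduct_star_self_nonneg v), dotProduct_self_eq_zero]

theorem mulVec_single_sqrt_dotProduct_self {ι κ : Type*} [Fintype ι] [Fintype κ] [DecidableEq κ]
    {U : Matrix ι κ ℝ} {v : ι → ℝ} {j : κ} (hcol : ∀ r, U r j = v r / √(v ⬝ᵥ v)) :
    U *ᵥ Pi.single j √(v ⬝ᵥ v) = v := by
  by_cases hv : v = 0
  · simp [hv]
  have hβ : √(v ⬝ᵥ v) ≠ 0 := mt sqrt_dotProduct_self_eq_zero_iff.mp hv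
  ext r
  simp [mulVec_single, hcol r, div_mul_cancel₀ _ hβ]

theorem stmt_2_general {n m : ℕ} (A : Matrix (Fin n) (Fin n) ℝ) (hA : IsUnit A.det)
    (b x0 r0 : Fin n → ℝ) (hr0def : r0 = b - A *ᵥ x0)
    (U : Matrix (Fin n) (Fin (m + 1)) ℝ) (H : Matrix (Fin (m + 1)) (Fin (m + 1)) ℝ)
    (horth : Uᵀ * U = 1)
    (hfirst : ∀ r, U r 0 = r0 r / Real.sqrt (r0 ⬝ᵥ r0))
    (hbd : A * U = U * H)
    (y : Fin (m + 1) → ℝ)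
    (hmin : ∀ z : Fin (m + 1) → ℝ,
      Real.sqrt ((b - A *ᵥ (x0 + U *ᵥ y)) ⬝ᵥ (b - A *ᵥ (x0 + U *ᵥ y))) ≤
        Real.sqrt ((b - A *ᵥ (x0 + U *ᵥ z)) ⬝ᵥ (b - A *ᵥ (x0 + U *ᵥ z)))) :
    A *ᵥ (x0 + U *ᵥ y) = b := by
  set z := (Uᵀ * A⁻¹ * U) *ᵥ Pi.single 0 √(r0 ⬝ᵥ r0)
  have hexact : b - A *ᵥ (x0 + U *ᵥ z) = 0 := by
    rw [mulVec_add, mulVec_mulVec_transpose_mul_nonsing_inv_mul hA horth hbd,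
      mulVec_single_sqrt_dotProduct_self hfirst, hr0def]
    abel
  have hle := hmin z
  rw [hexact, zero_dotProduct, Real.sqrt_zero] at hle
  exact (sub_eq_zero.mp (sqrt_dotProduct_self_eq_zero_iff.mp
    (le_antisymm hle (Real.sqrt_nonneg _)))).symm

/-- GMRES: if the Arnoldi process breaks down at step `i` (so `A U_i = U_i H_i`),
then the GMRES iterate `x_i = x_0 + U_i y_i`, with `y_i` minimizing the residual
norm, satisfies `A x_i = b`. -/
theorem stmt_2 {n m : ℕ} (A : Matrix (Fin n) (Fin n) ℝ) (hA : IsUnit A.det)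
    (b x0 r0 : Fin n → ℝ) (hr0def : r0 = b - A *ᵥ x0) (hr0 : r0 ≠ 0)
    (U : Matrix (Fin n) (Fin (m + 1)) ℝ) (H : Matrix (Fin (m + 1)) (Fin (m + 1)) ℝ)
    (horth : Uᵀ * U = 1)
    (hfirst : ∀ r, U r 0 = r0 r / Real.sqrt (r0 ⬝ᵥ r0))
    (hbd : A * U = U * H)
    (y : Fin (m + 1) → ℝ)
    (hmin : ∀ z : Fin (m + 1) → ℝ,
      Real.sqrt ((b - A *ᵥ (x0 + U *ᵥ y)) ⬝ᵥ (b - A *ᵥ (x0 + U *ᵥ y))) ≤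
        Real.sqrt ((b - A *ᵥ (x0 + U *ᵥ z)) ⬝ᵥ (b - A *ᵥ (x0 + U *ᵥ z)))) :
    A *ᵥ (x0 + U *ᵥ y) = b :=
  stmt_2_general A hA b x0 r0 hr0def U H horth hfirst hbd y hmin
end

section
/- The vectors {u_i} and {w_i} generated by the nonsymmetric Lanczos process (assuming no breakdown, i.e., all α_i ≠ 0 and β_i ≠ 0) are bi-orthonormal: w_i^T u_i = 1 for all i, and w_j^T u_i = 0 for all i ≠ j. -/
/-!
Write the two Lanczos recurrences as `A uᵢ = αᵢ uᵢ₊₁ + γᵢ uᵢ + βᵢ₋₁ uᵢ₋₁` and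
`Aᵀ wᵢ = βᵢ wᵢ₊₁ + γᵢ wᵢ + αᵢ₋₁ wᵢ₋₁`, and prove bi-orthonormality of `u₁, …, u_k` and
`w₁, …, w_k` by induction on `k`. Pairing the first recurrence at `i = k` with `w_j`, `j ≤ k`,
and using `w_jᵀ A u_k = (Aᵀ w_j)ᵀ u_k` together with the second recurrence at `j`, every term
except `αₖ w_jᵀ uₖ₊₁` cancels by the induction hypothesis and the choice of `γₖ`; as `αₖ ≠ 0`,
this gives `w_jᵀ uₖ₊₁ = 0`. The roles of `(A, u, α)` and `(Aᵀ, w, β)` are symmetric, so the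
same computation gives `wₖ₊₁ᵀ u_i = 0`, and `βₖ` is chosen exactly so that `wₖ₊₁ᵀ uₖ₊₁ = 1`.
-/

open Matrix

section Lanczos

variable {ι K : Type*} [Fintype ι] [CommRing K] {A : Matrix ι ι K} {u w : ℕ → ι → K}
  {a b α β γ : ℕ → K} {m k i j : ℕ}

/-- Indices start at `1`; the vector `u 0` only ever appears multiplied by `b 0 = 0`. -/
def IsThreeTermRecurrence (A : Matrix ι ι K) (u : ℕ → ι → K) (a b γ : ℕ → K) (m : ℕ) : Prop :=
  ∀ i, 1 ≤ i → i < m → A *ᵥ u i = a i • u (i + 1) + γ i • u i + b (i - 1) • u (i - 1)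

def IsBiorthonormalUpTo (u w : ℕ → ι → K) (k : ℕ) : Prop :=
  ∀ i j, 1 ≤ i → i ≤ k → 1 ≤ j → j ≤ k → w j ⬝ᵥ u i = if i = j then 1 else 0

theorem IsThreeTermRecurrence.dotProduct_mulVec (h : IsThreeTermRecurrence A u a b γ m)
    (v : ι → K) (hi : 1 ≤ i) (him : i < m) :
    v ⬝ᵥ (A *ᵥ u i) =
      a i * (v ⬝ᵥ u (i + 1)) + γ i * (v ⬝ᵥ u i) + b (i - 1) * (v ⬝ᵥ u (i - 1)) := by
  simp only [h i hi him, dotProduct_add, dotProduct_smul, smul_eq_mul]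

theorem IsThreeTermRecurrence.mulVec_dotProduct (h : IsThreeTermRecurrence A u a b γ m)
    (v : ι → K) (hi : 1 ≤ i) (him : i < m) :
    (A *ᵥ u i) ⬝ᵥ v =
      a i * (u (i + 1) ⬝ᵥ v) + γ i * (u i ⬝ᵥ v) + b (i - 1) * (u (i - 1) ⬝ᵥ v) := by
  simp only [h i hi him, add_dotProduct, smul_dotProduct, smul_eq_mul]

namespace IsBiorthonormalUpTo

theorem symm (h : IsBiorthonormalUpTo u w k) : IsBiorthonormalUpTo w u k :=
  fun i j hi hik hj hjk => by
    rw [dotProduct_comm, h j i hj hjk hi hik]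
    exact if_congr eq_comm rfl rfl

theorem succ (h : IsBiorthonormalUpTo u w k)
    (hu : ∀ j, 1 ≤ j → j ≤ k → w j ⬝ᵥ u (k + 1) = 0)
    (hw : ∀ i, 1 ≤ i → i ≤ k → w (k + 1) ⬝ᵥ u i = 0)
    (hdiag : w (k + 1) ⬝ᵥ u (k + 1) = 1) : IsBiorthonormalUpTo u w (k + 1) := by
  intro i j hi hik hj hjk
  rcases Nat.lt_or_eq_of_le hik with hik | rfl <;>
    rcases Nat.lt_or_eq_of_le hjk with hjk | rfl
  · exact h i j hi (by omega) hj (by omega)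
  · rw [hw i hi (by omega), if_neg (by omega)]
  · rw [hu j hj (by omega), if_neg (by omega)]
  · rw [hdiag, if_pos rfl]

theorem mul_dotProduct_pred_right (h : IsBiorthonormalUpTo u w k) (hb0 : b 0 = 0)
    (hi : 1 ≤ i) (hik : i ≤ k) (hj : 1 ≤ j) (hjk : j ≤ k) :
    b (i - 1) * (w j ⬝ᵥ u (i - 1)) = if i = j + 1 then b j else 0 := by
  obtain rfl | hi := hi.eq_or_lt
  · rw [Nat.sub_self, hb0, zero_mul, if_neg (by omega)]
  · rw [h (i - 1) j (by omega) (by omega) hj hjk]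
    split_ifs <;> first | omega | simp_all

theorem mul_dotProduct_pred_left (h : IsBiorthonormalUpTo u w k) (hb0 : b 0 = 0)
    (hi : 1 ≤ i) (hik : i ≤ k) (hj : 1 ≤ j) (hjk : j ≤ k) :
    b (j - 1) * (w (j - 1) ⬝ᵥ u i) = if j = i + 1 then b i else 0 := by
  rw [dotProduct_comm]
  exact h.symm.mul_dotProduct_pred_right hb0 hj hjk hi hik

theorem mul_dotProduct_succ_eq_zero (h : IsBiorthonormalUpTo u w k)
    (hu : IsThreeTermRecurrence A u α β γ m) (hw : IsThreeTermRecurrence Aᵀ w β α γ m)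
    (hα0 : α 0 = 0) (hβ0 : β 0 = 0) (hγ : γ k = w k ⬝ᵥ (A *ᵥ u k)) (hkm : k < m)
    (hj : 1 ≤ j) (hjk : j ≤ k) : α k * (w j ⬝ᵥ u (k + 1)) = 0 := by
  have hk : 1 ≤ k := hj.trans hjk
  have hexpand := hu.dotProduct_mulVec (w j) hk hkm
  rw [h.mul_dotProduct_pred_right hβ0 hk le_rfl hj hjk, h k j hk le_rfl hj hjk] at hexpand
  obtain rfl | hjk := hjk.eq_or_lt
  · rw [← hγ, if_pos rfl, if_neg (by omega)] at hexpand
    linear_combination -hexpand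
  · have hdual := hw.mulVec_dotProduct (u k) hj (hjk.trans hkm)
    rw [h k (j + 1) hk le_rfl (by omega) hjk, h k j hk le_rfl hj hjk.le,
      h.mul_dotProduct_pred_left hα0 hk le_rfl hj hjk.le, mulVec_transpose,
      ← dotProduct_mulVec] at hdual
    split_ifs at hdual hexpand <;> first | omega | linear_combination hdual - hexpand

end IsBiorthonormalUpTo

theorem isBiorthonormalUpTo_of_threeTermRecurrence [NoZeroDivisors K]
    (hu : IsThreeTermRecurrence A u α β γ m) (hw : IsThreeTermRecurrence Aᵀ w β α γ m)
    (hα0 : α 0 = 0) (hβ0 : β 0 = 0) (hγ : ∀ i, 1 ≤ i → i ≤ m → γ i = w i ⬝ᵥ (A *ᵥ u i))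
    (hαne : ∀ i, 1 ≤ i → i < m → α i ≠ 0) (hβne : ∀ i, 1 ≤ i → i < m → β i ≠ 0)
    (hdiag : ∀ i, 1 ≤ i → i ≤ m → w i ⬝ᵥ u i = 1) : IsBiorthonormalUpTo u w m := by
  have hu' : IsThreeTermRecurrence Aᵀᵀ u α β γ m := by rwa [transpose_transpose]
  have hγ' : ∀ i, 1 ≤ i → i ≤ m → γ i = u i ⬝ᵥ (Aᵀ *ᵥ w i) := fun i hi him => by
    rw [hγ i hi him, dotProduct_transpose_mulVec]
  suffices ∀ k ≤ m, IsBiorthonormalUpTo u w k from this m le_rfl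
  intro k
  induction k with
  | zero => exact fun _ _ _ hi hi0 => by omega
  | succ k ih =>
    intro hkm
    have h := ih (by omega)
    refine h.succ (fun j hj hjk => ?_) (fun i hi hik => ?_) (hdiag _ (by omega) hkm)
    · exact (mul_eq_zero.1 <| h.mul_dotProduct_succ_eq_zero hu hw hα0 hβ0
        (hγ k (by omega) (by omega)) (by omega) hj hjk).resolve_left (hαne k (by omega) hkm)
    · rw [dotProduct_comm]
      exact (mul_eq_zero.1 <| h.symm.mul_dotProduct_succ_eq_zero hw hu' hβ0 hα0
        (hγ' k (by omega) (by omega)) (by omega) hi hik).resolve_left (hβne k (by omega) hkm)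

end Lanczos

theorem isThreeTermRecurrence_of_normalize {ι K : Type*} [Fintype ι] [Field K] {A : Matrix ι ι K}
    {u uhat : ℕ → ι → K} {a b γ : ℕ → K} {m : ℕ}
    (hhat : ∀ i, 1 ≤ i → i < m → uhat i = A *ᵥ u i - γ i • u i - b (i - 1) • u (i - 1))
    (hne : ∀ i, 1 ≤ i → i < m → a i ≠ 0)
    (hnext : ∀ i, 1 ≤ i → i < m → u (i + 1) = (a i)⁻¹ • uhat i) :
    IsThreeTermRecurrence A u a b γ m := fun i hi him => by
  rw [hnext i hi him, smul_inv_smul₀ (hne i hi him), hhat i hi him]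
  abel

theorem inv_dotProduct_smul_dotProduct_self {ι K : Type*} [Fintype ι] [Field K]
    {x y : ι → K} (h : x ⬝ᵥ y ≠ 0) : ((x ⬝ᵥ y)⁻¹ • y) ⬝ᵥ x = 1 := by
  rw [smul_dotProduct, smul_eq_mul, dotProduct_comm y x, inv_mul_cancel₀ h]

theorem stmt_6_general {n : ℕ} (A : Matrix (Fin n) (Fin n) ℝ) (m : ℕ)
    (r0 rhat0 : Fin n → ℝ) (h0 : r0 ⬝ᵥ rhat0 ≠ 0)
    (u w uhat what : ℕ → Fin n → ℝ) (α β γ : ℕ → ℝ)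
    (hu1 : u 1 = (Real.sqrt (r0 ⬝ᵥ r0))⁻¹ • r0)
    (hw1 : w 1 = (u 1 ⬝ᵥ rhat0)⁻¹ • rhat0)
    (hα0 : α 0 = 0) (hβ0 : β 0 = 0)
    (hγ : ∀ i, 1 ≤ i → i ≤ m → γ i = w i ⬝ᵥ (A *ᵥ u i))
    (huhat : ∀ i, 1 ≤ i → i < m →
      uhat i = A *ᵥ u i - γ i • u i - β (i - 1) • u (i - 1))
    (hwhat : ∀ i, 1 ≤ i → i < m →
      what i = Aᵀ *ᵥ w i - γ i • w i - α (i - 1) • w (i - 1))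
    (hαne : ∀ i, 1 ≤ i → i < m → α i ≠ 0)
    (hu : ∀ i, 1 ≤ i → i < m → u (i + 1) = (α i)⁻¹ • uhat i)
    (hβ : ∀ i, 1 ≤ i → i < m → β i = u (i + 1) ⬝ᵥ what i)
    (hβne : ∀ i, 1 ≤ i → i < m → β i ≠ 0)
    (hw : ∀ i, 1 ≤ i → i < m → w (i + 1) = (β i)⁻¹ • what i) :
    ∀ i j, 1 ≤ i → i ≤ m → 1 ≤ j → j ≤ m →
      w j ⬝ᵥ u i = if i = j then 1 else 0 := by
  have hr0 : r0 ≠ 0 := by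
    rintro rfl
    exact h0 (zero_dotProduct rhat0)
  have hnorm : Real.sqrt (r0 ⬝ᵥ r0) ≠ 0 :=
    (Real.sqrt_ne_zero (Finset.sum_nonneg fun i _ => mul_self_nonneg (r0 i))).2
      (dotProduct_self_eq_zero.not.2 hr0)
  have hu1rhat0 : u 1 ⬝ᵥ rhat0 ≠ 0 := by
    rw [hu1, smul_dotProduct, smul_eq_mul]
    exact mul_ne_zero (inv_ne_zero hnorm) h0
  have hdiag : ∀ i, 1 ≤ i → i ≤ m → w i ⬝ᵥ u i = 1 := by
    rintro (_ | _ | k) hi him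
    · omega
    · rw [hw1]
      exact inv_dotProduct_smul_dotProduct_self hu1rhat0
    · have hβk := hβ (k + 1) (by omega) him
      rw [hw (k + 1) (by omega) him, hβk]
      exact inv_dotProduct_smul_dotProduct_self (hβk ▸ hβne (k + 1) (by omega) him)
  exact isBiorthonormalUpTo_of_threeTermRecurrence
    (isThreeTermRecurrence_of_normalize huhat hαne hu)
    (isThreeTermRecurrence_of_normalize hwhat hβne hw) hα0 hβ0 hγ hαne hβne hdiag

/-- The vectors `{uᵢ}` and `{wᵢ}` generated by the nonsymmetric Lanczos
process without breakdown are bi-orthonormal. Indices run from 1 to `m`. -/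
theorem stmt_6 {n : ℕ} (A : Matrix (Fin n) (Fin n) ℝ) (m : ℕ)
    (r0 rhat0 : Fin n → ℝ) (h0 : r0 ⬝ᵥ rhat0 ≠ 0)
    (u w uhat what : ℕ → Fin n → ℝ) (α β γ : ℕ → ℝ)
    (hu1 : u 1 = (Real.sqrt (r0 ⬝ᵥ r0))⁻¹ • r0)
    (hw1 : w 1 = (u 1 ⬝ᵥ rhat0)⁻¹ • rhat0)
    (hα0 : α 0 = 0) (hβ0 : β 0 = 0)
    (hγ : ∀ i, 1 ≤ i → i ≤ m → γ i = w i ⬝ᵥ (A *ᵥ u i))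
    (huhat : ∀ i, 1 ≤ i → i < m →
      uhat i = A *ᵥ u i - γ i • u i - β (i - 1) • u (i - 1))
    (hwhat : ∀ i, 1 ≤ i → i < m →
      what i = Aᵀ *ᵥ w i - γ i • w i - α (i - 1) • w (i - 1))
    (hα : ∀ i, 1 ≤ i → i < m → α i = Real.sqrt (uhat i ⬝ᵥ uhat i))
    (hαne : ∀ i, 1 ≤ i → i < m → α i ≠ 0)
    (hu : ∀ i, 1 ≤ i → i < m → u (i + 1) = (α i)⁻¹ • uhat i)
    (hβ : ∀ i, 1 ≤ i → i < m → β i = u (i + 1) ⬝ᵥ what i)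
    (hβne : ∀ i, 1 ≤ i → i < m → β i ≠ 0)
    (hw : ∀ i, 1 ≤ i → i < m → w (i + 1) = (β i)⁻¹ • what i) :
    ∀ i j, 1 ≤ i → i ≤ m → 1 ≤ j → j ≤ m →
      w j ⬝ᵥ u i = if i = j then 1 else 0 :=
  stmt_6_general A m r0 rhat0 h0 u w uhat what α β γ hu1 hw1 hα0 hβ0 hγ huhat hwhat hαne hu hβ hβne
    hw
end

section
/- If the Bi-CG algorithm runs without breakdown through step i, then the orthogonality relations p̂_j^T r_i = p_j^T r̂_i = 0 and the A-conjugacy relations p̂_j^T A p_{i+1} = p_j^T A^T p̂_{i+1} = 0 hold for all j ≤ i. -/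
/-!
Exchanging `(A, r, p)` with `(Aᵀ, r̂, p̂)` turns a Bi-CG run into a Bi-CG run with the same
coefficients `λ̂, μ`, so it suffices to prove `p̂ⱼᵀ rᵢ = 0` and `p̂ⱼᵀ A pᵢ₊₁ = 0`. These follow
together by induction on `i`. Since `p̂ₖ₊₁ = r̂ₖ + μₖ p̂ₖ`, a vector orthogonal to `p̂₁, …, p̂ₖ₊₁`
is orthogonal to `r̂ₖ`; and since `λ̂ⱼ Aᵀ p̂ⱼ = r̂ⱼ₋₁ - r̂ⱼ`, orthogonality of `rᵢ₊₁` to the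
shadow residuals gives `p̂ⱼᵀ A rᵢ₊₁ = 0` for `j ≤ i`. For the new index `j = i + 1` the choice
of `λ̂ᵢ₊₁` and `μᵢ₊₁` is exactly what cancels the remaining terms.
-/

open Matrix

variable {ι K : Type*} [Fintype ι] [Field K]

/-- Bi-CG runs without breakdown through step `m`, with an arbitrary shadow residual `rh 0`;
`rh`, `ph`, `lam` stand for `r̂`, `p̂`, `λ̂`, and the fields indexed by `i < m` describe
step `i + 1`. -/
structure IsBiCGRun (A : Matrix ι ι K) (m : ℕ) (r rh p ph : ℕ → ι → K) (lam mu : ℕ → K) :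
    Prop where
  p_one : p 1 = r 0
  ph_one : ph 1 = rh 0
  rh_dotProduct_ne_zero : ∀ i < m, rh i ⬝ᵥ r i ≠ 0
  ph_dotProduct_mulVec_ne_zero : ∀ i < m, ph (i + 1) ⬝ᵥ (A *ᵥ p (i + 1)) ≠ 0
  lam_eq : ∀ i < m, lam (i + 1) = rh i ⬝ᵥ r i / (ph (i + 1) ⬝ᵥ (A *ᵥ p (i + 1)))
  mu_eq : ∀ i < m, mu (i + 1) = rh (i + 1) ⬝ᵥ r (i + 1) / (rh i ⬝ᵥ r i)
  r_succ : ∀ i < m, r (i + 1) = r i - lam (i + 1) • (A *ᵥ p (i + 1))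
  rh_succ : ∀ i < m, rh (i + 1) = rh i - lam (i + 1) • (Aᵀ *ᵥ ph (i + 1))
  p_succ : ∀ i < m, p (i + 2) = r (i + 1) + mu (i + 1) • p (i + 1)
  ph_succ : ∀ i < m, ph (i + 2) = rh (i + 1) + mu (i + 1) • ph (i + 1)

namespace IsBiCGRun

variable {A : Matrix ι ι K} {m i : ℕ} {r rh p ph : ℕ → ι → K} {lam mu : ℕ → K}
  (h : IsBiCGRun A m r rh p ph lam mu)
include h

theorem transpose : IsBiCGRun Aᵀ m rh r ph p lam mu where
  p_one := h.ph_one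
  ph_one := h.p_one
  rh_dotProduct_ne_zero i hi := by
    rw [dotProduct_comm]
    exact h.rh_dotProduct_ne_zero i hi
  ph_dotProduct_mulVec_ne_zero i hi := by
    rw [dotProduct_transpose_mulVec]
    exact h.ph_dotProduct_mulVec_ne_zero i hi
  lam_eq i hi := by
    rw [h.lam_eq i hi, dotProduct_comm (r i), dotProduct_transpose_mulVec]
  mu_eq i hi := by
    rw [h.mu_eq i hi, dotProduct_comm (r i), dotProduct_comm (r (i + 1))]
  r_succ := h.rh_succ
  rh_succ := by simpa only [transpose_transpose] using h.r_succ
  p_succ := h.ph_succ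
  ph_succ := h.p_succ

theorem lam_ne_zero (hi : i < m) : lam (i + 1) ≠ 0 := by
  rw [h.lam_eq i hi]
  exact div_ne_zero (h.rh_dotProduct_ne_zero i hi) (h.ph_dotProduct_mulVec_ne_zero i hi)

theorem lam_mul (hi : i < m) :
    lam (i + 1) * (ph (i + 1) ⬝ᵥ (A *ᵥ p (i + 1))) = rh i ⬝ᵥ r i := by
  rw [h.lam_eq i hi, div_mul_cancel₀ _ (h.ph_dotProduct_mulVec_ne_zero i hi)]

theorem mu_mul (hi : i < m) : mu (i + 1) * (rh i ⬝ᵥ r i) = rh (i + 1) ⬝ᵥ r (i + 1) := by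
  rw [h.mu_eq i hi, div_mul_cancel₀ _ (h.rh_dotProduct_ne_zero i hi)]

theorem ph_succ_dotProduct (hi : i ≤ m) {v : ι → K}
    (hv : ∀ j, 1 ≤ j → j ≤ i → ph j ⬝ᵥ v = 0) : ph (i + 1) ⬝ᵥ v = rh i ⬝ᵥ v := by
  cases i with
  | zero => rw [h.ph_one]
  | succ i =>
    rw [h.ph_succ i hi, add_dotProduct, smul_dotProduct, hv (i + 1) (by omega) le_rfl,
      smul_zero, add_zero]

theorem rh_dotProduct_eq_zero (hi : i ≤ m) {v : ι → K}
    (hv : ∀ j, 1 ≤ j → j ≤ i + 1 → ph j ⬝ᵥ v = 0) : rh i ⬝ᵥ v = 0 := by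
  rw [← h.ph_succ_dotProduct hi fun j hj₁ hj => hv j hj₁ (by omega)]
  exact hv (i + 1) (by omega) le_rfl

theorem lam_mul_ph_dotProduct_mulVec (hi : i < m) (v : ι → K) :
    lam (i + 1) * (ph (i + 1) ⬝ᵥ (A *ᵥ v)) = rh i ⬝ᵥ v - rh (i + 1) ⬝ᵥ v := by
  rw [h.rh_succ i hi, sub_dotProduct, smul_dotProduct, dotProduct_comm (Aᵀ *ᵥ _),
    dotProduct_transpose_mulVec, smul_eq_mul, sub_sub_cancel]

theorem ph_dotProduct_r_succ (hi : i < m) (hr : ∀ j, 1 ≤ j → j ≤ i → ph j ⬝ᵥ r i = 0)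
    (hAp : ∀ j, 1 ≤ j → j ≤ i → ph j ⬝ᵥ (A *ᵥ p (i + 1)) = 0) :
    ∀ j, 1 ≤ j → j ≤ i + 1 → ph j ⬝ᵥ r (i + 1) = 0 := by
  intro j hj₁ hj
  rw [h.r_succ i hi, dotProduct_sub, dotProduct_smul, smul_eq_mul]
  rcases hj.lt_or_eq with hj | rfl
  · rw [hr j hj₁ (by omega), hAp j hj₁ (by omega), mul_zero, sub_zero]
  · rw [h.lam_mul hi, h.ph_succ_dotProduct hi.le hr, sub_self]

theorem ph_dotProduct_mulVec_p_succ (hi : i < m)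
    (hAp : ∀ j, 1 ≤ j → j ≤ i → ph j ⬝ᵥ (A *ᵥ p (i + 1)) = 0)
    (hr : ∀ j, 1 ≤ j → j ≤ i + 1 → ph j ⬝ᵥ r (i + 1) = 0) :
    ∀ j, 1 ≤ j → j ≤ i + 1 → ph j ⬝ᵥ (A *ᵥ p (i + 2)) = 0 := by
  rintro j hj₁ hj
  obtain ⟨k, rfl⟩ : ∃ k, j = k + 1 := ⟨j - 1, by omega⟩
  have hk : k < m := by omega
  refine (mul_eq_zero.mp ?_).resolve_left (h.lam_ne_zero hk)
  rw [h.p_succ i hi, mulVec_add, mulVec_smul, dotProduct_add, dotProduct_smul, smul_eq_mul,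
    mul_add, h.lam_mul_ph_dotProduct_mulVec hk]
  rcases hj.lt_or_eq with hj | hj
  · rw [h.rh_dotProduct_eq_zero hk.le fun j hj₁ hj => hr j hj₁ (by omega),
      h.rh_dotProduct_eq_zero hk fun j hj₁ hj => hr j hj₁ (by omega),
      hAp (k + 1) (by omega) (by omega)]
    ring
  · obtain rfl : k = i := by omega
    rw [h.rh_dotProduct_eq_zero hi.le fun j hj₁ hj => hr j hj₁ (by omega), mul_left_comm,
      h.lam_mul hi, h.mu_mul hi]
    ring

theorem ph_orthogonal :
    ∀ i ≤ m, ∀ j, 1 ≤ j → j ≤ i → ph j ⬝ᵥ r i = 0 ∧ ph j ⬝ᵥ (A *ᵥ p (i + 1)) = 0 := by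
  intro i
  induction i with
  | zero => intro _ j hj₁ hj; omega
  | succ i ih =>
    intro (hi : i < m)
    have hAp j hj₁ hj := (ih hi.le j hj₁ hj).2
    have hr := h.ph_dotProduct_r_succ hi (fun j hj₁ hj => (ih hi.le j hj₁ hj).1) hAp
    exact fun j hj₁ hj => ⟨hr j hj₁ hj, h.ph_dotProduct_mulVec_p_succ hi hAp hr j hj₁ hj⟩

end IsBiCGRun

/-- If Bi-CG runs without breakdown through step `m`, then the orthogonality
relations `p̂ⱼᵀ rₘ = pⱼᵀ r̂ₘ = 0` and the conjugacy relations
`p̂ⱼᵀ A p_{m+1} = pⱼᵀ Aᵀ p̂_{m+1} = 0` hold for all `1 ≤ j ≤ m`. -/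
theorem stmt_12 {n : ℕ} (A : Matrix (Fin n) (Fin n) ℝ) (m : ℕ)
    (r rh p ph : ℕ → Fin n → ℝ) (lam mu : ℕ → ℝ)
    (hrh0 : rh 0 = r 0) (hp1 : p 1 = r 0) (hph1 : ph 1 = r 0)
    (hlam : ∀ i, 1 ≤ i → i ≤ m →
      lam i = (rh (i - 1) ⬝ᵥ r (i - 1)) / (ph i ⬝ᵥ (A *ᵥ p i)))
    (hmu : ∀ i, 1 ≤ i → i ≤ m →
      mu i = (rh i ⬝ᵥ r i) / (rh (i - 1) ⬝ᵥ r (i - 1)))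
    (hr : ∀ i, 1 ≤ i → i ≤ m → r i = r (i - 1) - lam i • (A *ᵥ p i))
    (hrh : ∀ i, 1 ≤ i → i ≤ m → rh i = rh (i - 1) - lam i • (Aᵀ *ᵥ ph i))
    (hp : ∀ i, 1 ≤ i → i ≤ m → p (i + 1) = r i + mu i • p i)
    (hph : ∀ i, 1 ≤ i → i ≤ m → ph (i + 1) = rh i + mu i • ph i)
    (hden : ∀ i, 1 ≤ i → i ≤ m → ph i ⬝ᵥ (A *ᵥ p i) ≠ 0)
    (heta : ∀ i, i ≤ m → rh i ⬝ᵥ r i ≠ 0) :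
    ∀ j, 1 ≤ j → j ≤ m →
      ph j ⬝ᵥ r m = 0 ∧ p j ⬝ᵥ rh m = 0 ∧
      ph j ⬝ᵥ (A *ᵥ p (m + 1)) = 0 ∧ p j ⬝ᵥ (Aᵀ *ᵥ ph (m + 1)) = 0 := by
  have hrun : IsBiCGRun A m r rh p ph lam mu :=
    { p_one := hp1
      ph_one := hph1.trans hrh0.symm
      rh_dotProduct_ne_zero := fun i hi => heta i hi.le
      ph_dotProduct_mulVec_ne_zero := fun i hi => hden (i + 1) (by omega) hi
      lam_eq := fun i hi => hlam (i + 1) (by omega) hi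
      mu_eq := fun i hi => hmu (i + 1) (by omega) hi
      r_succ := fun i hi => hr (i + 1) (by omega) hi
      rh_succ := fun i hi => hrh (i + 1) (by omega) hi
      p_succ := fun i hi => hp (i + 1) (by omega) hi
      ph_succ := fun i hi => hph (i + 1) (by omega) hi }
  intro j hj₁ hj
  obtain ⟨hphr, hphAp⟩ := hrun.ph_orthogonal m le_rfl j hj₁ hj
  obtain ⟨hprh, hpATph⟩ := hrun.transpose.ph_orthogonal m le_rfl j hj₁ hj
  exact ⟨hphr, hprh, hphAp, hpATph⟩
end

section
/- With F = diag(f_i) where f_1 = 1, f_{i+1} = f_i β_i/α_i, and the LU factorization T = L H of the tridiagonal matrix T (ℓ_1 = γ_1, φ_i = β_i/ℓ_i, ℓ_{i+1} = γ_{i+1} − φ_i α_i), one has F^{-1} H^T F = L L_D^{-1}, where L_D = diag(ℓ_1,...,ℓ_n). -/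
/-!
Both sides are lower bidiagonal, so it suffices to compare entries. On the diagonal both are `1`;
on the subdiagonal, `f_{k+1}⁻¹ φₖ fₖ = (αₖ / (fₖ βₖ)) (βₖ / ℓₖ) fₖ = αₖ / ℓₖ`: the scaling `F`
is chosen exactly to trade the `βₖ` of `Hᵀ` for the `αₖ` of `L`.
-/

open Matrix

theorem ne_zero_of_succ_eq_mul_div {G₀ : Type*} [GroupWithZero G₀] {n : ℕ} {f α β : ℕ → G₀}
    (hα : ∀ i, i + 1 < n → α i ≠ 0) (hβ : ∀ i, i + 1 < n → β i ≠ 0) (h0 : f 0 ≠ 0)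
    (hf : ∀ i, i + 1 < n → f (i + 1) = f i * β i / α i) : ∀ i, i < n → f i ≠ 0
  | 0, _ => h0
  | i + 1, hi => by
    rw [hf i hi]
    exact div_ne_zero (mul_ne_zero (ne_zero_of_succ_eq_mul_div hα hβ h0 hf i (by omega))
      (hβ i hi)) (hα i hi)

theorem Matrix.inv_diagonal_of_ne_zero {ι K : Type*} [Fintype ι] [DecidableEq ι] [Field K]
    {v : ι → K} (hv : ∀ i, v i ≠ 0) : (diagonal v)⁻¹ = diagonal fun i => (v i)⁻¹ := by
  refine inv_eq_right_inv ?_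
  rw [diagonal_mul_diagonal, ← diagonal_one]
  exact congrArg diagonal (funext fun i => mul_inv_cancel₀ (hv i))

theorem inv_mul_div_mul_eq_mul_inv {K : Type*} [Field K] {a b c d : K} (hc : c ≠ 0) (hb : b ≠ 0) :
    (c * b / a)⁻¹ * (b / d) * c = a * d⁻¹ := by
  rcases eq_or_ne a 0 with rfl | ha
  · simp
  · field_simp

theorem stmt_15_general {n : ℕ} (α β f ℓ φ : ℕ → ℝ)
    (hαne : ∀ i, i + 1 < n → α i ≠ 0)
    (hβne : ∀ i, i + 1 < n → β i ≠ 0)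
    (hℓne : ∀ i, i < n → ℓ i ≠ 0)
    (hf1 : f 0 = 1)
    (hf : ∀ i, i + 1 < n → f (i + 1) = f i * β i / α i)
    (hφ : ∀ i, i + 1 < n → φ i = β i / ℓ i)
    (L : Matrix (Fin n) (Fin n) ℝ)
    (hL : L = Matrix.of fun j k : Fin n =>
      if (j : ℕ) = (k : ℕ) then ℓ (j : ℕ)
      else if (j : ℕ) = (k : ℕ) + 1 then α (k : ℕ) else 0)
    (H : Matrix (Fin n) (Fin n) ℝ)
    (hH : H = Matrix.of fun j k : Fin n =>
      if (j : ℕ) = (k : ℕ) then 1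
      else if (k : ℕ) = (j : ℕ) + 1 then φ (j : ℕ) else 0)
    (F LD : Matrix (Fin n) (Fin n) ℝ)
    (hF : F = Matrix.diagonal fun j : Fin n => f (j : ℕ))
    (hLD : LD = Matrix.diagonal fun j : Fin n => ℓ (j : ℕ)) :
    F⁻¹ * Hᵀ * F = L * LD⁻¹ := by
  have hfne := ne_zero_of_succ_eq_mul_div hαne hβne (hf1 ▸ one_ne_zero) hf
  rw [hF, hLD, inv_diagonal_of_ne_zero fun j : Fin n => hfne j j.is_lt,
    inv_diagonal_of_ne_zero fun j : Fin n => hℓne j j.is_lt, hL, hH]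
  ext j k
  simp only [diagonal_mul, mul_diagonal, transpose_apply, of_apply]
  by_cases hdiag : (j : ℕ) = k
  · rw [if_pos hdiag.symm, if_pos hdiag, Fin.ext hdiag, mul_one, inv_mul_cancel₀ (hfne k k.is_lt),
      mul_inv_cancel₀ (hℓne k k.is_lt)]
  by_cases hsub : (j : ℕ) = k + 1
  · have hk : (k : ℕ) + 1 < n := hsub ▸ j.is_lt
    rw [if_neg (Ne.symm hdiag), if_pos hsub, if_neg hdiag, if_pos hsub, hsub, hf k hk, hφ k hk]
    exact inv_mul_div_mul_eq_mul_inv (hfne k (by omega)) (hβne k hk)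
  · rw [if_neg (Ne.symm hdiag), if_neg (by omega), if_neg hdiag, if_neg hsub]
    simp

/-- With `F = diag(f)`, `f₁ = 1`, `f_{i+1} = fᵢ βᵢ/αᵢ`, and the LU
factorization data of the tridiagonal matrix (`ℓ₁ = γ₁`, `φᵢ = βᵢ/ℓᵢ`,
`ℓ_{i+1} = γ_{i+1} − φᵢ αᵢ`), one has `F⁻¹ Hᵀ F = L L_D⁻¹`. (0-indexed.) -/
theorem stmt_15 {n : ℕ} (α β γ f ℓ φ : ℕ → ℝ)
    (hαne : ∀ i, i + 1 < n → α i ≠ 0)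
    (hβne : ∀ i, i + 1 < n → β i ≠ 0)
    (hℓne : ∀ i, i < n → ℓ i ≠ 0)
    (hf1 : f 0 = 1)
    (hf : ∀ i, i + 1 < n → f (i + 1) = f i * β i / α i)
    (hℓ0 : ℓ 0 = γ 0)
    (hφ : ∀ i, i + 1 < n → φ i = β i / ℓ i)
    (hℓS : ∀ i, i + 1 < n → ℓ (i + 1) = γ (i + 1) - φ i * α i)
    (L : Matrix (Fin n) (Fin n) ℝ)
    (hL : L = Matrix.of fun j k : Fin n =>
      if (j : ℕ) = (k : ℕ) then ℓ (j : ℕ)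
      else if (j : ℕ) = (k : ℕ) + 1 then α (k : ℕ) else 0)
    (H : Matrix (Fin n) (Fin n) ℝ)
    (hH : H = Matrix.of fun j k : Fin n =>
      if (j : ℕ) = (k : ℕ) then 1
      else if (k : ℕ) = (j : ℕ) + 1 then φ (j : ℕ) else 0)
    (F LD : Matrix (Fin n) (Fin n) ℝ)
    (hF : F = Matrix.diagonal fun j : Fin n => f (j : ℕ))
    (hLD : LD = Matrix.diagonal fun j : Fin n => ℓ (j : ℕ)) :
    F⁻¹ * Hᵀ * F = L * LD⁻¹ :=
  stmt_15_general α β f ℓ φ hαne hβne hℓne hf1 hf hφ L hL H hH F LD hF hLD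
end

section
/- Suppose AV = UL, A^T Z = VL (with V = ZH, U = QH, AQ = UL) and V^T U = F with F = diag(f_i) satisfying f_1=1, f_{i+1} = f_i β_i/α_i; then Z^T A Q = F L_D = diag(f_1 ℓ_1, ..., f_n ℓ_n). -/
/-!
From `V = Z H` and `A Q = U L` we get `Hᵀ (Zᵀ A Q) = Vᵀ U L = F L`. The recursion for `f` says
precisely that `F L = Hᵀ F L_D` (the entrywise form of `F⁻¹ Hᵀ F = L L_D⁻¹`), and `Hᵀ` is unit
lower bidiagonal, hence invertible, so it cancels.
-/

open Matrix

namespace Matrix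

variable {R : Type*} {n : ℕ}

def lowerBidiagonal [Zero R] (d s : ℕ → R) : Matrix (Fin n) (Fin n) R :=
  of fun j k => if (j : ℕ) = k then d j else if (j : ℕ) = k + 1 then s k else 0

def upperBidiagonal [Zero R] (d s : ℕ → R) : Matrix (Fin n) (Fin n) R :=
  of fun j k => if (j : ℕ) = k then d j else if (k : ℕ) = j + 1 then s j else 0

theorem transpose_upperBidiagonal [Zero R] (d s : ℕ → R) :
    (upperBidiagonal d s : Matrix (Fin n) (Fin n) R)ᵀ = lowerBidiagonal d s := by
  ext j k
  by_cases hjk : (j : ℕ) = k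
  · simp [upperBidiagonal, lowerBidiagonal, hjk]
  · simp [upperBidiagonal, lowerBidiagonal, hjk, Ne.symm hjk]

theorem lowerBidiagonal_congr [Zero R] {d d' s s' : ℕ → R} (hd : ∀ i < n, d i = d' i)
    (hs : ∀ i, i + 1 < n → s i = s' i) :
    (lowerBidiagonal d s : Matrix (Fin n) (Fin n) R) = lowerBidiagonal d' s' := by
  ext j k
  simp only [lowerBidiagonal, of_apply]
  split_ifs with hjk hsucc
  · exact hd j j.isLt
  · exact hs k (hsucc ▸ j.isLt)
  · rfl

theorem isLowerTriangular_lowerBidiagonal [Zero R] (d s : ℕ → R) :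
    (lowerBidiagonal d s : Matrix (Fin n) (Fin n) R).IsLowerTriangular := by
  intro j k hjk
  have hjk : (j : ℕ) < k := hjk
  simp only [lowerBidiagonal, of_apply]
  rw [if_neg (by omega), if_neg (by omega)]

theorem det_lowerBidiagonal [CommRing R] (d s : ℕ → R) :
    (lowerBidiagonal d s : Matrix (Fin n) (Fin n) R).det = ∏ i : Fin n, d i := by
  rw [det_of_isLowerTriangular _ (isLowerTriangular_lowerBidiagonal d s)]
  simp [lowerBidiagonal]

theorem diagonal_mul_lowerBidiagonal [NonUnitalNonAssocSemiring R] (g d s : ℕ → R) :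
    diagonal (fun j : Fin n => g j) * lowerBidiagonal d s =
      lowerBidiagonal (fun i => g i * d i) (fun i => g (i + 1) * s i) := by
  ext j k
  simp only [diagonal_mul, lowerBidiagonal, of_apply]
  split_ifs with hjk hsucc
  · rfl
  · rw [hsucc]
  · exact mul_zero _

theorem lowerBidiagonal_mul_diagonal [NonUnitalNonAssocSemiring R] (d s g : ℕ → R) :
    lowerBidiagonal d s * diagonal (fun j : Fin n => g j) =
      lowerBidiagonal (fun i => d i * g i) (fun i => s i * g i) := by
  ext j k
  simp only [mul_diagonal, lowerBidiagonal, of_apply]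
  split_ifs with hjk hsucc
  · rw [hjk]
  · rfl
  · exact zero_mul _

end Matrix

theorem stmt_16_general {n : ℕ} (A U V Q Z : Matrix (Fin n) (Fin n) ℝ)
    (α β f ℓ φ : ℕ → ℝ)
    (hαne : ∀ i, i + 1 < n → α i ≠ 0)
    (hβ : ∀ i, i + 1 < n → β i = ℓ i * φ i)
    (hf : ∀ i, i + 1 < n → f (i + 1) = f i * β i / α i)
    (L : Matrix (Fin n) (Fin n) ℝ)
    (hL : L = Matrix.of fun j k : Fin n =>
      if (j : ℕ) = (k : ℕ) then ℓ (j : ℕ)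
      else if (j : ℕ) = (k : ℕ) + 1 then α (k : ℕ) else 0)
    (H : Matrix (Fin n) (Fin n) ℝ)
    (hH : H = Matrix.of fun j k : Fin n =>
      if (j : ℕ) = (k : ℕ) then 1
      else if (k : ℕ) = (j : ℕ) + 1 then φ (j : ℕ) else 0)
    (F : Matrix (Fin n) (Fin n) ℝ)
    (hF : F = Matrix.diagonal fun j : Fin n => f (j : ℕ))
    (hV : V = Z * H) (hAQ : A * Q = U * L)
    (hVU : Vᵀ * U = F) :
    Zᵀ * A * Q = Matrix.diagonal fun j : Fin n => f (j : ℕ) * ℓ (j : ℕ) := by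
  replace hL : L = lowerBidiagonal ℓ α := hL
  have hHt : Hᵀ = lowerBidiagonal 1 φ := hH ▸ transpose_upperBidiagonal 1 φ
  have hHt_unit : IsUnit Hᵀ := by
    rw [isUnit_iff_isUnit_det, hHt, det_lowerBidiagonal]
    simp
  have hFL : F * L = Hᵀ * diagonal fun j : Fin n => f j * ℓ j := by
    rw [hF, hL, hHt, diagonal_mul_lowerBidiagonal,
      lowerBidiagonal_mul_diagonal _ _ fun i => f i * ℓ i]
    refine lowerBidiagonal_congr (fun i _ => (one_mul _).symm) fun i hi => ?_
    rw [hf i hi, hβ i hi]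
    field_simp [hαne i hi]
  refine hHt_unit.mul_left_cancel ?_
  calc Hᵀ * (Zᵀ * A * Q) = (Z * H)ᵀ * (A * Q) := by
        simp only [transpose_mul, Matrix.mul_assoc]
    _ = F * L := by rw [← hV, hAQ, ← Matrix.mul_assoc, hVU]
    _ = _ := hFL

/-- Alternative QMR factorization: from `A V = U L`, `Aᵀ Z = V L`, `V = Z H`,
`U = Q H`, `A Q = U L` and `Vᵀ U = F = diag(fᵢ)` with `f₁ = 1`,
`f_{i+1} = fᵢ βᵢ/αᵢ` (where `βᵢ = ℓᵢ φᵢ` is the superdiagonal of `T = L H`),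
one gets `Zᵀ A Q = F L_D = diag(fᵢ ℓᵢ)`. (0-indexed.) -/
theorem stmt_16 {n : ℕ} (A U V Q Z : Matrix (Fin n) (Fin n) ℝ)
    (α β f ℓ φ : ℕ → ℝ)
    (hαne : ∀ i, i + 1 < n → α i ≠ 0)
    (hℓne : ∀ i, i < n → ℓ i ≠ 0)
    (hβ : ∀ i, i + 1 < n → β i = ℓ i * φ i)
    (hf1 : f 0 = 1)
    (hf : ∀ i, i + 1 < n → f (i + 1) = f i * β i / α i)
    (L : Matrix (Fin n) (Fin n) ℝ)
    (hL : L = Matrix.of fun j k : Fin n =>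
      if (j : ℕ) = (k : ℕ) then ℓ (j : ℕ)
      else if (j : ℕ) = (k : ℕ) + 1 then α (k : ℕ) else 0)
    (H : Matrix (Fin n) (Fin n) ℝ)
    (hH : H = Matrix.of fun j k : Fin n =>
      if (j : ℕ) = (k : ℕ) then 1
      else if (k : ℕ) = (j : ℕ) + 1 then φ (j : ℕ) else 0)
    (F : Matrix (Fin n) (Fin n) ℝ)
    (hF : F = Matrix.diagonal fun j : Fin n => f (j : ℕ))
    (hAV : A * V = U * L) (hAZ : Aᵀ * Z = V * L)
    (hV : V = Z * H) (hU : U = Q * H) (hAQ : A * Q = U * L)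
    (hVU : Vᵀ * U = F) :
    Zᵀ * A * Q = Matrix.diagonal fun j : Fin n => f (j : ℕ) * ℓ (j : ℕ) :=
  stmt_16_general A U V Q Z α β f ℓ φ hαne hβ hf L hL H hH F hF hV hAQ hVU
end

section
/- If the bidiagonalization-based iterative method defined by x_i = x_{i-1} + ξ_i v_i with ξ_1 = ‖r_0‖/α_1 and ξ_i = −ξ_{i-1} β_{i-1}/α_i satisfies the orthogonality conditions u_j^T r_i = 0 for j ≤ i, where r_i = b − A x_i, and at some step β_i = 0, then x_i is the exact solution: A x_i = b. -/
/-!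
Each step of the method subtracts a multiple of `A vᵢ = αᵢ uᵢ + βᵢ uᵢ₊₁` from the residual, and
`r₀` is a multiple of `u₁`, so by induction `rᵢ + ξᵢ βᵢ uᵢ₊₁` lies in `span {u₁, …, uᵢ}`.
When `βₘ = 0` the residual `rₘ` itself lies in `span {u₁, …, uₘ}`; being orthogonal to all of these
vectors, it is orthogonal to itself and hence vanishes.
-/

open Matrix Submodule

theorem sqrt_dotProduct_self_smul_inv_smul {ι : Type*} [Fintype ι] (w : ι → ℝ) :
    √(w ⬝ᵥ w) • (√(w ⬝ᵥ w))⁻¹ • w = w := by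
  by_cases hw : w = 0
  · simp [hw]
  have hpos : 0 < w ⬝ᵥ w :=
    lt_of_le_of_ne (dotProduct_self_star_nonneg w) (Ne.symm (mt dotProduct_self_eq_zero.mp hw))
  exact smul_inv_smul₀ (Real.sqrt_pos.mpr hpos).ne' w

theorem dotProduct_eq_zero_of_mem_span {ι R : Type*} [Fintype ι] [CommSemiring R]
    {S : Set (ι → R)} {w y : ι → R} (hw : w ∈ span R S) (hS : ∀ s ∈ S, s ⬝ᵥ y = 0) :
    w ⬝ᵥ y = 0 := by
  induction hw using span_induction with
  | mem s hs => exact hS s hs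
  | zero => exact zero_dotProduct y
  | add a c _ _ ha hc => rw [add_dotProduct, ha, hc, add_zero]
  | smul t a _ ha => rw [smul_dotProduct, ha, smul_zero]

theorem eq_zero_of_mem_span_of_forall_dotProduct_eq_zero {ι R : Type*} [Fintype ι] [CommRing R]
    [LinearOrder R] [IsStrictOrderedRing R] {S : Set (ι → R)} {w : ι → R}
    (hw : w ∈ span R S) (hS : ∀ s ∈ S, s ⬝ᵥ w = 0) : w = 0 :=
  dotProduct_self_eq_zero.mp (dotProduct_eq_zero_of_mem_span hw hS)

theorem add_smul_mem_span_of_bidiag_step {R M : Type*} [CommRing R] [AddCommGroup M] [Module R M]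
    (r u : ℕ → M) (α β ξ : ℕ → R) (m : ℕ) (hr0 : r 0 ∈ span R (u '' Set.Icc 1 1))
    (hstep : ∀ i, 1 ≤ i → i ≤ m → r i = r (i - 1) - ξ i • (α i • u i + β i • u (i + 1)))
    {i : ℕ} (hi : 1 ≤ i) (him : i ≤ m) :
    r i + (ξ i * β i) • u (i + 1) ∈ span R (u '' Set.Icc 1 i) := by
  have hu : ∀ j, 1 ≤ j → u j ∈ span R (u '' Set.Icc 1 j) := fun j hj =>
    subset_span ⟨j, ⟨hj, le_rfl⟩, rfl⟩
  induction i, hi using Nat.le_induction with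
  | base =>
    have h : r 1 + (ξ 1 * β 1) • u 2 = r 0 - (ξ 1 * α 1) • u 1 := by
      rw [hstep 1 le_rfl him]; module
    rw [h]
    exact sub_mem hr0 (smul_mem _ _ (hu 1 le_rfl))
  | succ i hi ih =>
    have h : r (i + 1) + (ξ (i + 1) * β (i + 1)) • u (i + 2) =
        (r i + (ξ i * β i) • u (i + 1)) - (ξ i * β i + ξ (i + 1) * α (i + 1)) • u (i + 1) := by
      rw [hstep (i + 1) (by omega) him, Nat.add_sub_cancel]; module
    have hmono : span R (u '' Set.Icc 1 i) ≤ span R (u '' Set.Icc 1 (i + 1)) :=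
      span_mono (Set.image_mono (Set.Icc_subset_Icc_right (Nat.le_succ i)))
    rw [h]
    exact sub_mem (hmono (ih (by omega))) (smul_mem _ _ (hu (i + 1) (by omega)))

theorem stmt_18_general {n : ℕ} (A : Matrix (Fin n) (Fin n) ℝ)
    (b : Fin n → ℝ) (m : ℕ) (hm : 1 ≤ m)
    (x r : ℕ → Fin n → ℝ) (u v : ℕ → Fin n → ℝ) (α β ξ : ℕ → ℝ)
    (hr : ∀ i, i ≤ m → r i = b - A *ᵥ x i)
    (hu1 : u 1 = (Real.sqrt (r 0 ⬝ᵥ r 0))⁻¹ • r 0)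
    (hAv : ∀ i, 1 ≤ i → i ≤ m → A *ᵥ v i = α i • u i + β i • u (i + 1))
    (hx : ∀ i, 1 ≤ i → i ≤ m → x i = x (i - 1) + ξ i • v i)
    (horth : ∀ j, 1 ≤ j → j ≤ m → u j ⬝ᵥ r m = 0)
    (hβm : β m = 0) :
    A *ᵥ x m = b := by
  have hr0 : r 0 ∈ span ℝ (u '' Set.Icc 1 1) := by
    rw [← sqrt_dotProduct_self_smul_inv_smul (r 0), ← hu1]
    exact smul_mem _ _ (subset_span ⟨1, ⟨le_rfl, le_rfl⟩, rfl⟩)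
  have hstep : ∀ i, 1 ≤ i → i ≤ m →
      r i = r (i - 1) - ξ i • (α i • u i + β i • u (i + 1)) := by
    intro i hi him
    rw [hr i him, hr (i - 1) (by omega), hx i hi him, ← hAv i hi him, mulVec_add, mulVec_smul]
    abel
  have hmem := add_smul_mem_span_of_bidiag_step r u α β ξ m hr0 hstep hm le_rfl
  rw [hβm, mul_zero, zero_smul, add_zero] at hmem
  have hrm : r m = 0 := eq_zero_of_mem_span_of_forall_dotProduct_eq_zero hmem <| by
    rintro _ ⟨j, ⟨hj1, hjm⟩, rfl⟩
    exact horth j hj1 hjm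
  rw [hr m le_rfl, sub_eq_zero] at hrm
  exact hrm.symm

/-- The bidiagonalization-based iterative method: if the orthogonality
conditions `uⱼᵀ rₘ = 0`, `j ≤ m`, hold and `βₘ = 0` at step `m`, then `xₘ`
is the exact solution, `A xₘ = b`. (Vectors indexed from 1.) -/
theorem stmt_18 {n : ℕ} (A : Matrix (Fin n) (Fin n) ℝ) (hA : IsUnit A.det)
    (b : Fin n → ℝ) (m : ℕ) (hm : 1 ≤ m)
    (x r : ℕ → Fin n → ℝ) (u v : ℕ → Fin n → ℝ) (α β ξ : ℕ → ℝ)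
    (hr : ∀ i, i ≤ m → r i = b - A *ᵥ x i)
    (hr0ne : r 0 ≠ 0)
    (hu1 : u 1 = (Real.sqrt (r 0 ⬝ᵥ r 0))⁻¹ • r 0)
    (hβ0 : β 0 = 0)
    (hAv : ∀ i, 1 ≤ i → i ≤ m → A *ᵥ v i = α i • u i + β i • u (i + 1))
    (hAu : ∀ i, 1 ≤ i → i ≤ m → Aᵀ *ᵥ u i = α i • v i + β (i - 1) • v (i - 1))
    (hξ1 : ξ 1 = Real.sqrt (r 0 ⬝ᵥ r 0) / α 1)
    (hξ : ∀ i, 2 ≤ i → i ≤ m → ξ i = -ξ (i - 1) * β (i - 1) / α i)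
    (hx : ∀ i, 1 ≤ i → i ≤ m → x i = x (i - 1) + ξ i • v i)
    (hON : ∀ j k, 1 ≤ j → j ≤ m + 1 → 1 ≤ k → k ≤ m + 1 →
      u j ⬝ᵥ u k = if j = k then 1 else 0)
    (horth : ∀ j, 1 ≤ j → j ≤ m → u j ⬝ᵥ r m = 0)
    (hβm : β m = 0) :
    A *ᵥ x m = b :=
  stmt_18_general A b m hm x r u v α β ξ hr hu1 hAv hx horth hβm
end
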